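/- arXiv:2008.06998 — 5 statements merged into one kernel-verified Lean document; each statement's English description precedes it below -/
import Mathlib

section
/- Let r : ℕ and let d, d' : Fin r → ℤ be nonincreasing tuples (d i ≥ d j whenever i ≤ j). If for every integer e one has ∑_{i : Fin r} max(d i + e + 1, 0) = ∑_{i : Fin r} max(d' i + e + 1, 0), then d = d'. -/
theorem aux_char (r : ℕ) (f : Fin r → ℤ) (hf : ∀ i j : Fin r, i ≤ j → f j ≤ f i)
    (t : ℤ) (i : Fin r) :
    t ≤ f i ↔ (i : ℕ) < (Finset.univ.filter fun j => t ≤ f j).card := by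
  constructor
  · intro hi
    have hsub : Finset.Iic i ⊆ Finset.univ.filter fun j => t ≤ f j := by
      intro j hj
      simp only [Finset.mem_filter, Finset.mem_univ, true_and]
      exact le_trans hi (hf j i (Finset.mem_Iic.mp hj))
    have hc := Finset.card_le_card hsub
    have hcard : (Finset.Iic i).card = (i : ℕ) + 1 := by
      simp [Fin.card_Iic]
    omega
  · intro hi
    by_contra hne
    have hsub : (Finset.univ.filter fun j => t ≤ f j) ⊆ Finset.Iio i := by
      intro j hj
      simp only [Finset.mem_filter, Finset.mem_univ, true_and] at hj
      rw [Finset.mem_Iio]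
      by_contra hji
      push_neg at hji
      exact hne (le_trans hj (hf i j hji))
    have hc := Finset.card_le_card hsub
    have hcard : (Finset.Iio i).card = (i : ℕ) := by
      simp [Fin.card_Iio]
    omega

/-- A vector bundle on ℙ¹ (given by its nonincreasing splitting type) is uniquely
determined by its `h⁰`-function `e ↦ ∑ i, max (d i + e + 1) 0`. -/
theorem splitting_type_determined_by_h0
    (r : ℕ) (d d' : Fin r → ℤ)
    (hd : ∀ i j : Fin r, i ≤ j → d j ≤ d i)
    (hd' : ∀ i j : Fin r, i ≤ j → d' j ≤ d' i)
    (h : ∀ e : ℤ, ∑ i : Fin r, max (d i + e + 1) 0 = ∑ i : Fin r, max (d' i + e + 1) 0) :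
    d = d' := by
  have aux : ∀ (f : Fin r → ℤ) (t : ℤ),
      (((Finset.univ.filter fun i => t ≤ f i).card : ℤ))
        = (∑ i : Fin r, max (f i + (-t) + 1) 0) - ∑ i : Fin r, max (f i + (-t - 1) + 1) 0 := by
    intro f t
    rw [← Finset.sum_boole, ← Finset.sum_sub_distrib]
    apply Finset.sum_congr rfl
    intro i _
    simp only [max_def]
    split_ifs <;> omega
  have count : ∀ t : ℤ, (Finset.univ.filter fun i => t ≤ d i).card
      = (Finset.univ.filter fun i => t ≤ d' i).card := by
    intro t
    have := aux d t
    rw [h (-t), h (-t - 1), ← aux d' t] at this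
    exact_mod_cast this
  funext i
  have h1 := aux_char r d hd (d i) i
  have h2 := aux_char r d' hd' (d' i) i
  have h3 := aux_char r d' hd' (d i) i
  have h4 := aux_char r d hd (d' i) i
  rw [count] at h1
  rw [← count] at h2
  exact le_antisymm (h3.mpr (h1.mp le_rfl)) (h4.mpr (h2.mp le_rfl))
end

section
/- Let r : ℕ and let d, d' : Fin r → ℤ be nonincreasing tuples (d i ≥ d j and d' i ≥ d' j whenever i ≤ j) with equal total sums: ∑_{i : Fin r} d i = ∑_{i : Fin r} d' i. Then the following are equivalent: (a) for every integer e, ∑_{i : Fin r} max(d' i + e + 1, 0) ≤ ∑_{i : Fin r} max(d i + e + 1, 0); (b) for every k ≤ r, ∑_{i : Fin r, i < k} d' i ≤ ∑_{i : Fin r, i < k} d i. -/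
open Finset

private lemma card_filter_val_lt (r k : ℕ) (hk : k ≤ r) :
    (univ.filter (fun i : Fin r => (i : ℕ) < k)).card = k := by
  have : univ.filter (fun i : Fin r => (i : ℕ) < k)
      = (univ : Finset (Fin k)).map (Fin.castLEEmb hk) := by
    ext i
    simp only [mem_filter, mem_univ, true_and, mem_map, Fin.castLEEmb]
    constructor
    · intro h; exact ⟨⟨i, h⟩, rfl⟩
    · rintro ⟨j, rfl⟩; exact j.isLt
  rw [this, card_map, card_univ, Fintype.card_fin]

/-- a lower bound: partial sum plus `k*c` is at most the truncated sum. -/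
private lemma aux_lower (r : ℕ) (f : Fin r → ℤ) (c : ℤ) (k : ℕ) (hk : k ≤ r) :
    (∑ i ∈ univ.filter (fun i : Fin r => (i : ℕ) < k), f i) + (k : ℤ) * c ≤
      ∑ i : Fin r, max (f i + c) 0 := by
  have h1 : (∑ i ∈ univ.filter (fun i : Fin r => (i : ℕ) < k), f i) + (k : ℤ) * c
      = ∑ i ∈ univ.filter (fun i : Fin r => (i : ℕ) < k), (f i + c) := by
    rw [Finset.sum_add_distrib, Finset.sum_const, card_filter_val_lt r k hk]
    ring
  rw [h1]
  calc ∑ i ∈ univ.filter (fun i : Fin r => (i : ℕ) < k), (f i + c)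
      ≤ ∑ i ∈ univ.filter (fun i : Fin r => (i : ℕ) < k), max (f i + c) 0 :=
        Finset.sum_le_sum fun i _ => le_max_left _ _
    _ ≤ ∑ i : Fin r, max (f i + c) 0 :=
        Finset.sum_le_sum_of_subset_of_nonneg (Finset.filter_subset _ _)
          (fun i _ _ => le_max_right _ _)

/-- A downward-closed subset of `Fin r` is an initial segment. -/
private lemma lowerset_eq (r : ℕ) (A : Finset (Fin r))
    (h : ∀ i j : Fin r, i ≤ j → j ∈ A → i ∈ A) :
    A = univ.filter (fun i : Fin r => (i : ℕ) < A.card) := by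
  ext i
  simp only [mem_filter, mem_univ, true_and]
  constructor
  · intro hi
    have hsub : Finset.Iic i ⊆ A := by
      intro j hj
      exact h j i (by simpa using hj) hi
    have := Finset.card_le_card hsub
    rw [Fin.card_Iic] at this
    omega
  · intro hi
    by_contra hni
    have hsub : A ⊆ Finset.Iio i := by
      intro j hj
      simp only [Finset.mem_Iio]
      by_contra hji
      push_neg at hji
      exact hni (h i j hji hj)
    have := Finset.card_le_card hsub
    rw [Fin.card_Iio] at this
    omega

/-- For nonincreasing tuples `d, d'` of equal total sum, the cohomological
semicontinuity condition (a) for all twists is equivalent to the dominance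
condition (b) on partial sums. -/
theorem h0_semicontinuity_iff_partial_sums
    (r : ℕ) (d d' : Fin r → ℤ)
    (hd : ∀ i j : Fin r, i ≤ j → d j ≤ d i)
    (hd' : ∀ i j : Fin r, i ≤ j → d' j ≤ d' i)
    (hsum : ∑ i : Fin r, d i = ∑ i : Fin r, d' i) :
    (∀ e : ℤ, ∑ i : Fin r, max (d' i + e + 1) 0 ≤ ∑ i : Fin r, max (d i + e + 1) 0) ↔
      (∀ k : ℕ, k ≤ r →
        ∑ i ∈ Finset.univ.filter (fun i : Fin r => (i : ℕ) < k), d' i ≤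
          ∑ i ∈ Finset.univ.filter (fun i : Fin r => (i : ℕ) < k), d i) := by
  constructor
  · -- (a) → (b)
    intro ha k hk
    rcases eq_or_lt_of_le hk with hkr | hkr
    · -- k = r : the filters are all of univ, use equal sums
      have hall : univ.filter (fun i : Fin r => (i : ℕ) < k) = (univ : Finset (Fin r)) := by
        apply Finset.filter_true_of_mem
        intro i _
        rw [hkr]
        exact i.isLt
      rw [hall]
      exact le_of_eq hsum.symm
    · -- k < r : evaluate at e = -d ⟨k⟩ - 1
      set ik : Fin r := ⟨k, hkr⟩ with hik
      set t : ℤ := d ik with ht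
      have he := ha (-t - 1)
      have hre : ∀ i : Fin r, ∀ g : Fin r → ℤ, g i + (-t - 1) + 1 = g i - t := by
        intro i g; ring
      -- RHS equals partial sum of d minus k * t
      have hrhs : ∑ i : Fin r, max (d i + (-t - 1) + 1) 0
          = ∑ i ∈ univ.filter (fun i : Fin r => (i : ℕ) < k), d i - (k : ℤ) * t := by
        rw [← Finset.sum_filter_add_sum_filter_not univ (fun i : Fin r => (i : ℕ) < k)]
        have h1 : ∑ i ∈ univ.filter (fun i : Fin r => (i : ℕ) < k), max (d i + (-t - 1) + 1) 0
            = ∑ i ∈ univ.filter (fun i : Fin r => (i : ℕ) < k), (d i - t) := by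
          apply Finset.sum_congr rfl
          intro i hi
          simp only [mem_filter, mem_univ, true_and] at hi
          have : t ≤ d i := hd i ik (by simp [hik, Fin.le_def]; omega)
          rw [hre i d]
          exact max_eq_left (by omega)
        have h2 : ∑ i ∈ univ.filter (fun i : Fin r => ¬ (i : ℕ) < k), max (d i + (-t - 1) + 1) 0
            = 0 := by
          apply Finset.sum_eq_zero
          intro i hi
          simp only [mem_filter, mem_univ, true_and, not_lt] at hi
          have : d i ≤ t := hd ik i (by simp [hik, Fin.le_def]; omega)
          rw [hre i d]
          exact max_eq_right (by omega)
        rw [h1, h2, add_zero, Finset.sum_sub_distrib, Finset.sum_const,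
          card_filter_val_lt r k hk]
        ring
      have hlhs : ∑ i ∈ univ.filter (fun i : Fin r => (i : ℕ) < k), d' i - (k : ℤ) * t
          ≤ ∑ i : Fin r, max (d' i + (-t - 1) + 1) 0 := by
        have := aux_lower r d' (-t) k hk
        calc ∑ i ∈ univ.filter (fun i : Fin r => (i : ℕ) < k), d' i - (k : ℤ) * t
            = (∑ i ∈ univ.filter (fun i : Fin r => (i : ℕ) < k), d' i) + (k : ℤ) * (-t) := by ring
          _ ≤ ∑ i : Fin r, max (d' i + (-t)) 0 := this
          _ = ∑ i : Fin r, max (d' i + (-t - 1) + 1) 0 := by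
              apply Finset.sum_congr rfl; intro i _; rw [hre i d']; ring_nf
      have := le_trans hlhs (le_trans he (le_of_eq hrhs))
      omega
  · -- (b) → (a)
    intro hb e
    set A : Finset (Fin r) := univ.filter (fun i : Fin r => 0 < d' i + (e + 1)) with hA
    have hlow : ∀ i j : Fin r, i ≤ j → j ∈ A → i ∈ A := by
      intro i j hij hj
      simp only [hA, mem_filter, mem_univ, true_and] at hj ⊢
      have := hd' i j hij
      omega
    have hAeq := lowerset_eq r A hlow
    have hkr : A.card ≤ r := by
      calc A.card ≤ (univ : Finset (Fin r)).card := Finset.card_le_card (Finset.filter_subset _ _)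
        _ = r := by simp
    have hlhs : ∑ i : Fin r, max (d' i + e + 1) 0
        = ∑ i ∈ univ.filter (fun i : Fin r => (i : ℕ) < A.card), d' i + (A.card : ℤ) * (e + 1) := by
      have h1 : ∑ i : Fin r, max (d' i + e + 1) 0 = ∑ i ∈ A, (d' i + (e + 1)) := by
        rw [← Finset.sum_filter_add_sum_filter_not univ (fun i : Fin r => 0 < d' i + (e + 1))]
        have h2 : ∑ i ∈ A, max (d' i + e + 1) 0 = ∑ i ∈ A, (d' i + (e + 1)) := by
          apply Finset.sum_congr rfl
          intro i hi
          simp only [hA, mem_filter, mem_univ, true_and] at hi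
          have : max (d' i + e + 1) 0 = d' i + e + 1 := max_eq_left (by omega)
          rw [this]; ring
        have h3 : ∑ i ∈ univ.filter (fun i : Fin r => ¬ 0 < d' i + (e + 1)),
            max (d' i + e + 1) 0 = 0 := by
          apply Finset.sum_eq_zero
          intro i hi
          simp only [mem_filter, mem_univ, true_and, not_lt] at hi
          exact max_eq_right (by omega)
        rw [← hA, h2, h3, add_zero]
      rw [h1, Finset.sum_add_distrib, Finset.sum_const, ← hAeq]
      ring
    rw [hlhs]
    calc ∑ i ∈ univ.filter (fun i : Fin r => (i : ℕ) < A.card), d' i + (A.card : ℤ) * (e + 1)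
        ≤ ∑ i ∈ univ.filter (fun i : Fin r => (i : ℕ) < A.card), d i + (A.card : ℤ) * (e + 1) := by
          have := hb A.card hkr; omega
      _ ≤ ∑ i : Fin r, max (d i + (e + 1)) 0 := aux_lower r d (e + 1) A.card hkr
      _ = ∑ i : Fin r, max (d i + e + 1) 0 := by
          apply Finset.sum_congr rfl; intro i _; ring_nf
end

section
/- Let r ≥ 1 be a natural number, D an integer, and h : ℤ → ℤ a function. There exists a nonincreasing tuple d : Fin r → ℤ (d i ≥ d j whenever i ≤ j) with ∑_{i : Fin r} d i = D and h(e) = ∑_{i : Fin r} max(d i + e + 1, 0) for all integers e, if and only if: (i) h(e+1) + h(e−1) ≥ 2·h(e) for all e ∈ ℤ; (ii) h(e) = 0 for all sufficiently small e; and (iii) h(e) = D + r·(e+1) for all sufficiently large e. -/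
/-!
The `h⁰`-function of `d` is a sum of the convex functions `e ↦ max (d i + e + 1) 0`, each of
which vanishes for small `e` and is linear of slope one for large `e`; this gives the forward
direction. Conversely, the jump `g e = h e - h (e - 1)` is nondecreasing by convexity and climbs
from `0` to `r`. Letting `-d i` be the first `e` with `i < g e`, the `h⁰`-function of `d` has the
same jumps as `h` and vanishes for small `e`, so it equals `h`; comparing both for large `e`
gives `∑ i, d i = D`.
-/

open Finset Filter

theorem Int.eq_of_forall_sub_sub_one_eq {f f' : ℤ → ℤ}
    (hdiff : ∀ e, f e - f (e - 1) = f' e - f' (e - 1)) (e₀ : ℤ) (h₀ : f e₀ = f' e₀) :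
    f = f' := by
  funext e
  induction e using Int.inductionOn' (b := e₀) with
  | zero => exact h₀
  | succ k _ ih => have := hdiff (k + 1); simp only [add_sub_cancel_right] at this; omega
  | pred k _ ih => have := hdiff k; omega

namespace SplittingType

section h0

variable {ι : Type*} [Fintype ι]

def h0 (d : ι → ℤ) (e : ℤ) : ℤ := ∑ i, max (d i + e + 1) 0

theorem two_mul_h0_le (d : ι → ℤ) (e : ℤ) : 2 * h0 d e ≤ h0 d (e + 1) + h0 d (e - 1) := by
  simp only [h0, mul_sum, ← sum_add_distrib]
  exact sum_le_sum fun i _ => by omega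

theorem eventually_h0_eq_zero (d : ι → ℤ) : ∀ᶠ e in atBot, h0 d e = 0 := by
  have hterm : ∀ i, ∀ᶠ e in atBot, max (d i + e + 1) 0 = 0 := fun i =>
    (eventually_le_atBot (-d i - 1)).mono fun e he => by omega
  filter_upwards [eventually_all.2 hterm] with e he
  exact sum_eq_zero fun i _ => he i

theorem eventually_h0_eq (d : ι → ℤ) :
    ∀ᶠ e in atTop, h0 d e = ∑ i, d i + Fintype.card ι * (e + 1) := by
  have hterm : ∀ i, ∀ᶠ e in atTop, max (d i + e + 1) 0 = d i + (e + 1) := fun i =>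
    (eventually_ge_atTop (-d i - 1)).mono fun e he => by omega
  filter_upwards [eventually_all.2 hterm] with e he
  rw [h0, sum_congr rfl fun i _ => he i, sum_add_distrib, sum_const, card_univ, nsmul_eq_mul]

theorem h0_sub_h0_sub_one (d : ι → ℤ) (e : ℤ) :
    h0 d e - h0 d (e - 1) = #{i | -e ≤ d i} := by
  rw [h0, h0, ← sum_sub_distrib, natCast_card_filter]
  exact sum_congr rfl fun i _ => by split_ifs <;> omega

end h0

theorem exists_monotone_card_le_eq {r : ℕ} {g : ℤ → ℤ} (hg : Monotone g)
    (hbot : ∀ᶠ e in atBot, g e = 0) (htop : ∀ᶠ e in atTop, g e = r) :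
    ∃ E : Fin r → ℤ, Monotone E ∧ ∀ e, (#{i | E i ≤ e} : ℤ) = g e := by
  obtain ⟨N, hN⟩ := eventually_atBot.1 hbot
  obtain ⟨M, hM⟩ := eventually_atTop.1 htop
  have hex : ∀ i : Fin r, ∃ E, (i : ℤ) < g E ∧ ∀ z, (i : ℤ) < g z → E ≤ z := fun i =>
    Int.exists_least_of_bdd
      ⟨N, fun z hz => by by_contra! hzN; rw [hN z hzN.le] at hz; omega⟩
      ⟨M, by rw [hM M le_rfl]; exact_mod_cast i.isLt⟩
  choose E hE hleast using hex
  have hle_iff : ∀ i e, E i ≤ e ↔ (i : ℤ) < g e :=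
    fun i e => ⟨fun hie => (hE i).trans_le (hg hie), hleast i e⟩
  refine ⟨E, fun i j hij => (hle_iff i (E j)).2 ((Int.ofNat_le.2 hij).trans_lt (hE j)), ?_⟩
  intro e
  have hnonneg : 0 ≤ g e :=
    (hN (min e N) (min_le_right e N)).symm.trans_le (hg (min_le_left e N))
  have hle : g e ≤ r := (hg (le_max_left e M)).trans (hM (max e M) (le_max_right e M)).le
  simp only [hle_iff]
  lift g e to ℕ using hnonneg with n
  simp only [Nat.cast_lt, Fin.card_filter_val_lt]
  omega

end SplittingType

open SplittingType in
theorem exists_splitting_type_iff_general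
    (r : ℕ) (D : ℤ) (h : ℤ → ℤ) :
    (∃ d : Fin r → ℤ, (∀ i j : Fin r, i ≤ j → d j ≤ d i) ∧
        (∑ i : Fin r, d i = D) ∧
        (∀ e : ℤ, h e = ∑ i : Fin r, max (d i + e + 1) 0)) ↔
      ((∀ e : ℤ, 2 * h e ≤ h (e + 1) + h (e - 1)) ∧
        (∃ N : ℤ, ∀ e : ℤ, e ≤ N → h e = 0) ∧
        (∃ M : ℤ, ∀ e : ℤ, M ≤ e → h e = D + (r : ℤ) * (e + 1))) := by
  constructor
  · rintro ⟨d, -, rfl, hh⟩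
    obtain rfl : h = h0 d := funext hh
    refine ⟨two_mul_h0_le d, eventually_atBot.1 (eventually_h0_eq_zero d), ?_⟩
    simpa using eventually_atTop.1 (eventually_h0_eq d)
  · rintro ⟨hconv, ⟨N, hN⟩, ⟨M, hM⟩⟩
    set g : ℤ → ℤ := fun e => h e - h (e - 1)
    have hg : Monotone g := monotone_int_of_le_succ fun e => by
      have := hconv e; simp only [g, add_sub_cancel_right]; omega
    obtain ⟨E, hE, hcard⟩ := exists_monotone_card_le_eq hg
      (eventually_atBot.2 ⟨N, fun e he => by simp [g, hN e he, hN (e - 1) (by omega)]⟩)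
      (eventually_atTop.2 ⟨M + 1, fun e he => by
        simp only [g, hM e (by omega), hM (e - 1) (by omega)]; ring⟩)
    obtain ⟨e₀, he₀, hfe₀⟩ :=
      ((eventually_le_atBot N).and (eventually_h0_eq_zero (-E))).exists
    have hh : h = h0 (-E) := Int.eq_of_forall_sub_sub_one_eq
      (fun e => by simp [h0_sub_h0_sub_one, ← hcard, g]) e₀ (by rw [hN e₀ he₀, hfe₀])
    obtain ⟨e, he, hfe⟩ := ((eventually_ge_atTop M).and (eventually_h0_eq (-E))).exists
    refine ⟨-E, fun i j hij => neg_le_neg (hE hij), ?_, fun e => congrFun hh e⟩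
    have := (hM e he).symm.trans (congrFun hh e)
    simp only [hfe, Fintype.card_fin, Pi.neg_apply] at this ⊢
    omega

/-- Characterization of the functions `h : ℤ → ℤ` that arise as the `h⁰`-function
`e ↦ ∑ i, max (d i + e + 1) 0` of a nonincreasing tuple `d : Fin r → ℤ` of sum `D`:
`h` is convex, vanishes for `e` sufficiently small, and equals `D + r (e + 1)` for
`e` sufficiently large. -/
theorem exists_splitting_type_iff
    (r : ℕ) (hr : 1 ≤ r) (D : ℤ) (h : ℤ → ℤ) :
    (∃ d : Fin r → ℤ, (∀ i j : Fin r, i ≤ j → d j ≤ d i) ∧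
        (∑ i : Fin r, d i = D) ∧
        (∀ e : ℤ, h e = ∑ i : Fin r, max (d i + e + 1) 0)) ↔
      ((∀ e : ℤ, 2 * h e ≤ h (e + 1) + h (e - 1)) ∧
        (∃ N : ℤ, ∀ e : ℤ, e ≤ N → h e = 0) ∧
        (∃ M : ℤ, ∀ e : ℤ, M ≤ e → h e = D + (r : ℤ) * (e + 1))) :=
  exists_splitting_type_iff_general r D h
end

section
/- Let r ≥ 2 be a natural number, let d' : Fin r → ℤ be a nonincreasing tuple, let d be an integer with d ≥ d' 0, and let d'' : Fin r → ℤ be a nonincreasing tuple with ∑_{i : Fin r} d'' i = ∑_{i : Fin r} d' i satisfying, for every integer e, ∑_{i : Fin r} max(d'' i + e + 1, 0) = max( max(d + e + 1, 0), ∑_{i : Fin r} max(d' i + e + 1, 0) ). Then d'' 0 = d, and for every k ≤ r one has ∑_{i : Fin r, i < k} d' i ≤ ∑_{i : Fin r, i < k} d'' i. -/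
/-- If `d''` is a nonincreasing tuple with the same sum as `d'` whose `h⁰`-function
is the pointwise maximum of the `h⁰`-function of `O(d)` (with `d ≥ d' 0`) and that of
`d'`, then `d'' 0 = d` and `d''` dominates `d'` in partial sums. -/
theorem splitting_type_max_h0_top_entry_and_dominance
    (r : ℕ) (hr : 2 ≤ r) (d' : Fin r → ℤ)
    (hd' : ∀ i j : Fin r, i ≤ j → d' j ≤ d' i)
    (d : ℤ) (hd : d' ⟨0, by omega⟩ ≤ d)
    (d'' : Fin r → ℤ)
    (hd'' : ∀ i j : Fin r, i ≤ j → d'' j ≤ d'' i)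
    (hsum : ∑ i : Fin r, d'' i = ∑ i : Fin r, d' i)
    (hmax : ∀ e : ℤ, ∑ i : Fin r, max (d'' i + e + 1) 0 =
      max (max (d + e + 1) 0) (∑ i : Fin r, max (d' i + e + 1) 0)) :
    d'' ⟨0, by omega⟩ = d ∧
      ∀ k : ℕ, k ≤ r →
        ∑ i ∈ Finset.univ.filter (fun i : Fin r => (i : ℕ) < k), d' i ≤
          ∑ i ∈ Finset.univ.filter (fun i : Fin r => (i : ℕ) < k), d'' i := by
  have z : Fin r := ⟨0, by omega⟩
  constructor
  · -- d'' 0 = d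
    have h1 : d'' ⟨0, by omega⟩ ≤ d := by
      have h := hmax (-d - 1)
      have h' : ∑ i : Fin r, max (d' i + (-d - 1) + 1) 0 = 0 := by
        apply Finset.sum_eq_zero
        intro i _
        have := hd' ⟨0, by omega⟩ i (by simp [Fin.le_def])
        omega
      rw [h'] at h
      have h0 : max (d + (-d - 1) + 1) 0 = 0 := by omega
      rw [h0] at h
      simp only [max_self] at h
      have hz := (Finset.sum_eq_zero_iff_of_nonneg
        (fun i _ => le_max_right (d'' i + (-d - 1) + 1) 0)).mp h
        ⟨0, by omega⟩ (Finset.mem_univ _)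
      omega
    have h2 : d ≤ d'' ⟨0, by omega⟩ := by
      set e : ℤ := -(d'' ⟨0, by omega⟩) - 1 with he
      have h := hmax e
      have hl : ∑ i : Fin r, max (d'' i + e + 1) 0 = 0 := by
        apply Finset.sum_eq_zero
        intro i _
        have := hd'' ⟨0, by omega⟩ i (by simp [Fin.le_def])
        omega
      rw [hl] at h
      have a1 : max (d + e + 1) 0 ≤ max (max (d + e + 1) 0)
          (∑ i : Fin r, max (d' i + e + 1) 0) := le_max_left _ _
      rw [← h] at a1
      omega
    omega
  · intro k hk
    rcases Nat.eq_zero_or_pos k with hk0 | hk1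
    · subst hk0; simp
    · set j : Fin r := ⟨k - 1, by omega⟩ with hj
      set e : ℤ := -(d'' j) - 1 with he
      set S := Finset.univ.filter (fun i : Fin r => (i : ℕ) < k) with hS
      have h''eq : ∑ i : Fin r, max (d'' i + e + 1) 0 = ∑ i ∈ S, (d'' i + e + 1) := by
        rw [← Finset.sum_subset (Finset.subset_univ S)
          (f := fun i => max (d'' i + e + 1) 0) ?_]
        · apply Finset.sum_congr rfl
          intro i hi
          have hik : (i : ℕ) < k := by
            simpa [hS] using hi
          have hle : i ≤ j := by
            simp only [hj, Fin.le_def]; omega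
          have := hd'' i j hle
          omega
        · intro i _ hi
          have hik : ¬ (i : ℕ) < k := by
            simpa [hS] using hi
          have hle : j ≤ i := by
            simp only [hj, Fin.le_def]; omega
          have := hd'' j i hle
          show max (d'' i + e + 1) 0 = 0
          omega
      have h'ge : ∑ i ∈ S, (d' i + e + 1) ≤ ∑ i : Fin r, max (d' i + e + 1) 0 := by
        calc ∑ i ∈ S, (d' i + e + 1) ≤ ∑ i ∈ S, max (d' i + e + 1) 0 :=
              Finset.sum_le_sum (fun i _ => le_max_left _ _)
          _ ≤ ∑ i : Fin r, max (d' i + e + 1) 0 :=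
              Finset.sum_le_sum_of_subset_of_nonneg (Finset.subset_univ S)
                (fun i _ _ => le_max_right _ _)
      have hub : ∑ i : Fin r, max (d' i + e + 1) 0 ≤ ∑ i : Fin r, max (d'' i + e + 1) 0 := by
        rw [hmax e]; exact le_max_right _ _
      have key : ∑ i ∈ S, (d' i + e + 1) ≤ ∑ i ∈ S, (d'' i + e + 1) := by
        calc ∑ i ∈ S, (d' i + e + 1) ≤ ∑ i : Fin r, max (d' i + e + 1) 0 := h'ge
          _ ≤ ∑ i : Fin r, max (d'' i + e + 1) 0 := hub
          _ = ∑ i ∈ S, (d'' i + e + 1) := h''eq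
      have expand : ∀ f : Fin r → ℤ, ∑ i ∈ S, (f i + e + 1) = ∑ i ∈ S, f i + S.card * (e + 1) := by
        intro f
        rw [Finset.sum_add_distrib, Finset.sum_add_distrib, Finset.sum_const,
          Finset.sum_const, nsmul_eq_mul, nsmul_eq_mul]
        ring
      rw [expand d', expand d''] at key
      omega
end

section
/- Let V be a finite type and let G : SimpleGraph V be a tree (G is connected and acyclic). Let P : V → V → Prop be a relation such that for all u, v with G.Adj u v, P u v ∨ P v u. Then either there exist u, v with G.Adj u v, P u v, and P v u, or there exists a vertex w such that P w u holds for every u with G.Adj w u. -/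
/-- On a finite tree, given a relation `P` such that each edge `{u, v}` satisfies
`P u v` or `P v u`, either some edge satisfies both `P u v` and `P v u`, or some
vertex `w` satisfies `P w u` for all of its neighbors `u`. -/
theorem tree_walk_dichotomy
    {V : Type*} [Fintype V] (G : SimpleGraph V)
    (hconn : G.Connected) (hacyc : G.IsAcyclic)
    (P : V → V → Prop)
    (hP : ∀ u v : V, G.Adj u v → P u v ∨ P v u) :
    (∃ u v : V, G.Adj u v ∧ P u v ∧ P v u) ∨
      (∃ w : V, ∀ u : V, G.Adj w u → P w u) := by
  classical
  by_cases h2 : ∃ w : V, ∀ u : V, G.Adj w u → P w u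
  · exact Or.inr h2
  left
  push_neg at h2
  -- every vertex w has a neighbor f w with ¬ P w (f w), hence P (f w) w
  choose f hadj hnP using h2
  have hPf : ∀ w, P (f w) w := fun w =>
    (hP w (f w) (hadj w)).resolve_left (hnP w)
  haveI : Fintype G.edgeSet := Fintype.ofFinite _
  have htree : G.IsTree := ⟨hconn, hacyc⟩
  have hcard : G.edgeFinset.card + 1 = Fintype.card V := htree.card_edgeFinset
  -- map each vertex to its out-edge
  have hmem : ∀ w : V, s(w, f w) ∈ G.edgeFinset := fun w =>
    SimpleGraph.mem_edgeFinset.mpr (hadj w)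
  have hlt : Fintype.card { e // e ∈ G.edgeFinset } < Fintype.card V := by
    rw [Fintype.card_coe]; omega
  obtain ⟨u, v, huv, heq⟩ :=
    Fintype.exists_ne_map_eq_of_card_lt
      (fun w : V => (⟨s(w, f w), hmem w⟩ : { e // e ∈ G.edgeFinset })) hlt
  have heq' : s(u, f u) = s(v, f v) := congrArg Subtype.val heq
  rw [Sym2.eq_iff] at heq'
  rcases heq' with ⟨h1, h2⟩ | ⟨h1, h2⟩
  · exact absurd h1 huv
  · refine ⟨u, v, ?_, ?_, ?_⟩
    · rw [← h2]; exact hadj u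
    · have := hPf v; rwa [← h1] at this
    · have := hPf u; rwa [h2] at this
end
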